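/- Let d ∈ ℕ, m_1,…,m_d, s_1,…,s_d ∈ (0,∞), u_1,…,u_d ∈ ℝ, define for each i the functions S_i(t) = m_i·(m_i sinh(m_i t) + s_i cosh(m_i t))/(m_i cosh(m_i t) + s_i sinh(m_i t)) and U_i(t) = m_i u_i/(m_i cosh(m_i t) + s_i sinh(m_i t)), let a(x) = −½‖x‖², and let u(t,x) = (2π)^{−d/2} (∏_{i=1}^d S_i(t)^{−1/2}) exp(−∑_{i=1}^d (x_i−U_i(t))²/(2 S_i(t))). Then for every t ≥ 0 and x ∈ ℝ^d it holds that ∂u/∂t(t,x) = u(t,x)·(a(x) − ∫_{ℝ^d} u(t,y) a(y) dy) + ∑_{i=1}^d ½ m_i² ∂²u/∂x_i²(t,x). -/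

import Mathlib

/-!
Each coordinate factor of `u` is a one-dimensional Gaussian density with variance `S` and mean `U`.
Writing `D = m cosh (m t) + s sinh (m t)`, we have `S = D' / D` and `U = m u₀ / D` with `D'' = m² D`,
so `S' = m² - S²` and `U' = -U S`. For a Gaussian with these parameters a direct computation gives
`∂ₜφ = φ · (-z²/2 + (S + U²)/2) + (m²/2) ∂²_z φ`, and `-(S + U²)/2` is the mean fitness
`∫ φ(z) (-z²/2) dz`. Since the fitness is a sum over coordinates and `u` is a product of such
factors, the Leibniz rule assembles the one-dimensional equations into the `d`-dimensional one.
-/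

open Real MeasureTheory ProbabilityTheory Finset

section Products

variable {ι : Type*} [Fintype ι] [DecidableEq ι]

lemma prod_apply_update {α M : Type*} [CommMonoid M] (f : ι → α → M) (x : ι → α) (i : ι) (y : α) :
    ∏ j, f j (Function.update x i y j) = f i y * ∏ j ∈ univ.erase i, f j (x j) := by
  rw [← mul_prod_erase _ _ (mem_univ i), Function.update_self]
  congr 1
  exact prod_congr rfl fun j hj ↦ by rw [Function.update_of_ne (ne_of_mem_erase hj)]

lemma prod_mul_eval_eq_prod_update {E : Type*} (f : ι → E → ℝ) (g : E → ℝ) (i : ι) (y : ι → E) :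
    (∏ j, f j (y j)) * g (y i) = ∏ j, Function.update f i (fun z ↦ f i z * g z) j (y j) := by
  have hne : ∀ j ∈ univ.erase i,
      Function.update f i (fun z ↦ f i z * g z) j (y j) = f j (y j) :=
    fun j hj ↦ by rw [Function.update_of_ne (ne_of_mem_erase hj)]
  rw [← mul_prod_erase _ _ (mem_univ i), ← mul_prod_erase _ _ (mem_univ i), Function.update_self,
    prod_congr rfl hne]
  ring

theorem hasDerivAt_prod_of_hasDerivAt_mul_add {𝕜 : Type*} [NontriviallyNormedField 𝕜]
    {f : ι → 𝕜 → 𝕜} {A B : ι → 𝕜} {t : 𝕜} (hf : ∀ i, HasDerivAt (f i) (f i t * A i + B i) t) :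
    HasDerivAt (fun τ ↦ ∏ i, f i τ)
      ((∏ i, f i t) * ∑ i, A i + ∑ i, (∏ j ∈ univ.erase i, f j t) * B i) t := by
  refine (HasDerivAt.fun_finsetProd (u := univ) fun i _ ↦ hf i).congr_deriv ?_
  simp only [smul_eq_mul, mul_add, sum_add_distrib, mul_sum]
  congr 1
  refine sum_congr rfl fun i _ ↦ ?_
  rw [← mul_prod_erase _ _ (mem_univ i)]
  ring

variable {E : Type*} [MeasureSpace E] [SigmaFinite (volume : Measure E)]

lemma integrable_prod_mul_eval {f : ι → E → ℝ} {g : E → ℝ} {i : ι}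
    (hf : ∀ j, Integrable (f j)) (hg : Integrable fun z ↦ f i z * g z) :
    Integrable fun y : ι → E ↦ (∏ j, f j (y j)) * g (y i) := by
  simp_rw [prod_mul_eval_eq_prod_update]
  refine Integrable.fintype_prod fun j ↦ ?_
  rcases eq_or_ne j i with rfl | hj
  · simpa using hg
  · simpa [hj] using hf j

lemma integral_prod_mul_eval (f : ι → E → ℝ) (g : E → ℝ) (i : ι) :
    ∫ y : ι → E, (∏ j, f j (y j)) * g (y i) =
      (∫ z, f i z * g z) * ∏ j ∈ univ.erase i, ∫ z, f j z := by
  simp_rw [prod_mul_eval_eq_prod_update]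
  rw [integral_fintype_prod_volume_eq_prod, ← mul_prod_erase _ _ (mem_univ i),
    Function.update_self]
  congr 1
  exact prod_congr rfl fun j hj ↦ by rw [Function.update_of_ne (ne_of_mem_erase hj)]

end Products

section GaussianKernel

/-- Unlike in `gaussianPDFReal`, the variance `σ` is a real parameter, so that the kernel can be
differentiated with respect to it. -/
noncomputable def gaussianKernel (c σ z : ℝ) : ℝ :=
  (2 * π) ^ (-(1 : ℝ) / 2) * σ ^ (-(1 : ℝ) / 2) * exp (-((z - c) ^ 2 / (2 * σ)))

lemma gaussianKernel_eq_gaussianPDFReal {σ : ℝ} (hσ : 0 < σ) (c : ℝ) :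
    gaussianKernel c σ = gaussianPDFReal c σ.toNNReal := by
  ext z
  rw [gaussianKernel, gaussianPDFReal, Real.coe_toNNReal _ hσ.le, sqrt_eq_rpow,
    mul_rpow (by positivity) hσ.le, mul_inv, ← rpow_neg (by positivity), ← rpow_neg hσ.le]
  congr 1
  · norm_num
  · ring_nf

lemma integral_gaussianKernel {σ : ℝ} (hσ : 0 < σ) (c : ℝ) :
    ∫ z, gaussianKernel c σ z = 1 := by
  rw [gaussianKernel_eq_gaussianPDFReal hσ]
  exact integral_gaussianPDFReal_eq_one c (by simpa using hσ)

lemma integral_gaussianKernel_mul_sq {σ : ℝ} (hσ : 0 < σ) (c : ℝ) :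
    ∫ z, gaussianKernel c σ z * z ^ 2 = σ + c ^ 2 := by
  have hv : σ.toNNReal ≠ 0 := by simpa using hσ
  have hvar := variance_eq_sub (memLp_id_gaussianReal (μ := c) (v := σ.toNNReal) 2)
  rw [variance_id_gaussianReal] at hvar
  simp only [Pi.pow_apply, id] at hvar
  rw [integral_id_gaussianReal, Real.coe_toNNReal _ hσ.le,
    integral_gaussianReal_eq_integral_smul hv] at hvar
  rw [gaussianKernel_eq_gaussianPDFReal hσ]
  simp only [smul_eq_mul] at hvar
  linarith

lemma integrable_gaussianKernel {σ : ℝ} (hσ : 0 < σ) (c : ℝ) :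
    Integrable (gaussianKernel c σ) :=
  .of_integral_ne_zero (by rw [integral_gaussianKernel hσ]; exact one_ne_zero)

lemma integrable_gaussianKernel_mul_sq {σ : ℝ} (hσ : 0 < σ) (c : ℝ) :
    Integrable fun z ↦ gaussianKernel c σ z * z ^ 2 :=
  .of_integral_ne_zero (by rw [integral_gaussianKernel_mul_sq hσ]; positivity)

lemma prod_gaussianKernel {ι : Type*} [Fintype ι] (c σ y : ι → ℝ) :
    ∏ i, gaussianKernel (c i) (σ i) (y i) =
      (2 * π) ^ (-(Fintype.card ι : ℝ) / 2) * (∏ i, σ i ^ (-(1 : ℝ) / 2)) *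
        exp (-∑ i, (y i - c i) ^ 2 / (2 * σ i)) := by
  simp only [gaussianKernel, prod_mul_distrib, prod_const, ← exp_sum, sum_neg_distrib, card_univ]
  rw [← rpow_natCast, ← rpow_mul (by positivity)]
  ring_nf

lemma integral_prod_gaussianKernel_mul_sum_sq {ι : Type*} [Fintype ι] {c σ : ι → ℝ}
    (hσ : ∀ i, 0 < σ i) :
    ∫ y : ι → ℝ, (∏ i, gaussianKernel (c i) (σ i) (y i)) * ∑ i, y i ^ 2 =
      ∑ i, (σ i + c i ^ 2) := by
  classical
  simp_rw [mul_sum]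
  rw [integral_finsetSum _ fun i _ ↦ integrable_prod_mul_eval
    (fun j ↦ integrable_gaussianKernel (hσ j) (c j))
    (integrable_gaussianKernel_mul_sq (hσ i) (c i))]
  refine sum_congr rfl fun i _ ↦ ?_
  rw [integral_prod_mul_eval (fun j ↦ gaussianKernel (c j) (σ j)) (fun z ↦ z ^ 2),
    integral_gaussianKernel_mul_sq (hσ i),
    prod_congr rfl fun j _ ↦ integral_gaussianKernel (hσ j) (c j)]
  simp

lemma hasDerivAt_gaussianKernel (c σ z : ℝ) :
    HasDerivAt (gaussianKernel c σ) (gaussianKernel c σ z * (-(z - c) / σ)) z := by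
  have h := ((((hasDerivAt_id z).sub_const c).pow 2).div_const (2 * σ)).neg.exp.const_mul
    ((2 * π) ^ (-(1 : ℝ) / 2) * σ ^ (-(1 : ℝ) / 2))
  refine h.congr_deriv ?_
  simp only [gaussianKernel, Pi.neg_apply, Pi.pow_apply, id]
  ring

lemma deriv_deriv_gaussianKernel (c : ℝ) {σ : ℝ} (hσ : σ ≠ 0) (z : ℝ) :
    deriv (deriv (gaussianKernel c σ)) z =
      gaussianKernel c σ z * ((z - c) ^ 2 / σ ^ 2 - 1 / σ) := by
  have hd : deriv (gaussianKernel c σ) = fun y ↦ gaussianKernel c σ y * (-(y - c) / σ) :=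
    funext fun y ↦ (hasDerivAt_gaussianKernel c σ y).deriv
  have h := (hasDerivAt_gaussianKernel c σ z).mul
    (((hasDerivAt_id' z).sub_const c).neg.div_const σ)
  rw [hd]
  refine (h.congr_deriv ?_).deriv
  simp only [Pi.neg_apply]
  field_simp
  ring

lemma HasDerivAt.gaussianKernel {c σ : ℝ → ℝ} {c' σ' t : ℝ}
    (hc : HasDerivAt c c' t) (hσ : HasDerivAt σ σ' t) (hσt : 0 < σ t) (z : ℝ) :
    HasDerivAt (fun τ ↦ gaussianKernel (c τ) (σ τ) z)
      (gaussianKernel (c t) (σ t) z * (-σ' / (2 * σ t) + (z - c t) * c' / σ t +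
        (z - c t) ^ 2 * σ' / (2 * σ t ^ 2))) t := by
  have h := ((hσ.rpow_const (p := -(1 : ℝ) / 2) (Or.inl hσt.ne')).const_mul
    ((2 * π) ^ (-(1 : ℝ) / 2))).mul
    ((((hasDerivAt_const t z).sub hc).pow 2).div (hσ.const_mul 2) (by positivity)).neg.exp
  refine h.congr_deriv ?_
  rw [rpow_sub_one hσt.ne']
  simp only [_root_.gaussianKernel, Pi.neg_apply, Pi.div_apply, Pi.pow_apply, Pi.sub_apply]
  field_simp
  ring

lemma hasDerivAt_gaussianKernel_replicatorMutator {c σ : ℝ → ℝ} {m t : ℝ}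
    (hc : HasDerivAt c (-c t * σ t) t) (hσ : HasDerivAt σ (m ^ 2 - σ t ^ 2) t) (hσt : 0 < σ t)
    (z : ℝ) :
    HasDerivAt (fun τ ↦ gaussianKernel (c τ) (σ τ) z)
      (gaussianKernel (c t) (σ t) z * (-(1 / 2) * z ^ 2 + 1 / 2 * (σ t + c t ^ 2)) +
        1 / 2 * m ^ 2 * deriv (deriv (gaussianKernel (c t) (σ t))) z) t := by
  refine (hc.gaussianKernel hσ hσt z).congr_deriv ?_
  rw [deriv_deriv_gaussianKernel _ hσt.ne']
  field_simp
  ring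

end GaussianKernel

section Riccati

lemma mul_cosh_add_mul_sinh_pos {p q r : ℝ} (hp : 0 < p) (hq : 0 ≤ q) (hr : 0 ≤ r) :
    0 < p * cosh r + q * sinh r := by
  have := sinh_nonneg_iff.mpr hr
  have := cosh_pos r
  positivity

lemma hasDerivAt_mul_cosh_add_mul_sinh (p q m t : ℝ) :
    HasDerivAt (fun τ ↦ p * cosh (m * τ) + q * sinh (m * τ))
      (m * (p * sinh (m * t) + q * cosh (m * t))) t := by
  have hmt := (hasDerivAt_id t).const_mul m
  refine ((hmt.cosh.const_mul p).add (hmt.sinh.const_mul q)).congr_deriv ?_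
  simp only [id]
  ring

lemma hasDerivAt_mul_sinh_add_mul_cosh (p q m t : ℝ) :
    HasDerivAt (fun τ ↦ p * sinh (m * τ) + q * cosh (m * τ))
      (m * (p * cosh (m * t) + q * sinh (m * t))) t := by
  have hmt := (hasDerivAt_id t).const_mul m
  refine ((hmt.sinh.const_mul p).add (hmt.cosh.const_mul q)).congr_deriv ?_
  simp only [id]
  ring

noncomputable def riccatiVariance (m s t : ℝ) : ℝ :=
  m * (m * sinh (m * t) + s * cosh (m * t)) / (m * cosh (m * t) + s * sinh (m * t))

noncomputable def riccatiMean (m s u₀ t : ℝ) : ℝ :=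
  m * u₀ / (m * cosh (m * t) + s * sinh (m * t))

lemma riccatiVariance_pos {m s t : ℝ} (hm : 0 < m) (hs : 0 < s) (ht : 0 ≤ t) :
    0 < riccatiVariance m s t := by
  have hmt : 0 ≤ m * t := by positivity
  have := mul_cosh_add_mul_sinh_pos hm hs.le hmt
  have := mul_cosh_add_mul_sinh_pos hs hm.le hmt
  unfold riccatiVariance
  rw [add_comm (m * sinh _)]
  positivity

lemma hasDerivAt_riccatiVariance {m s t : ℝ} (hD : m * cosh (m * t) + s * sinh (m * t) ≠ 0) :
    HasDerivAt (riccatiVariance m s) (m ^ 2 - riccatiVariance m s t ^ 2) t := by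
  refine (((hasDerivAt_mul_sinh_add_mul_cosh m s m t).const_mul m).div
    (hasDerivAt_mul_cosh_add_mul_sinh m s m t) hD).congr_deriv ?_
  unfold riccatiVariance
  field_simp

lemma hasDerivAt_riccatiMean {m s u₀ t : ℝ} (hD : m * cosh (m * t) + s * sinh (m * t) ≠ 0) :
    HasDerivAt (riccatiMean m s u₀) (-riccatiMean m s u₀ t * riccatiVariance m s t) t := by
  refine ((hasDerivAt_const t (m * u₀)).div
    (hasDerivAt_mul_cosh_add_mul_sinh m s m t) hD).congr_deriv ?_
  unfold riccatiMean riccatiVariance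
  field_simp
  ring

end Riccati

theorem stmt_6 (d : ℕ) (m s : Fin d → ℝ) (u₀ : Fin d → ℝ)
    (hm : ∀ i, 0 < m i) (hs : ∀ i, 0 < s i)
    (S U : Fin d → ℝ → ℝ)
    (hS : ∀ i, ∀ t : ℝ, S i t =
      m i * (m i * Real.sinh (m i * t) + s i * Real.cosh (m i * t)) /
        (m i * Real.cosh (m i * t) + s i * Real.sinh (m i * t)))
    (hU : ∀ i, ∀ t : ℝ, U i t =
      m i * u₀ i / (m i * Real.cosh (m i * t) + s i * Real.sinh (m i * t)))
    (a : (Fin d → ℝ) → ℝ)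
    (ha : ∀ x : Fin d → ℝ, a x = -(1 / 2 : ℝ) * ∑ i, (x i) ^ 2)
    (u : ℝ → (Fin d → ℝ) → ℝ)
    (hu : ∀ (t : ℝ) (x : Fin d → ℝ), u t x =
      (2 * Real.pi) ^ (-(d : ℝ) / 2) * (∏ i, (S i t) ^ (-(1 : ℝ) / 2)) *
        Real.exp (-∑ i, (x i - U i t) ^ 2 / (2 * S i t))) :
    ∀ (t : ℝ), 0 ≤ t → ∀ (x : Fin d → ℝ),
      HasDerivAt (fun τ => u τ x)
        (u t x * (a x - ∫ y : Fin d → ℝ, u t y * a y) +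
          ∑ i, (1 / 2 : ℝ) * (m i) ^ 2 *
            deriv (deriv (fun y : ℝ => u t (Function.update x i y))) (x i)) t := by
  intro t ht x
  have hu_prod (τ : ℝ) (y : Fin d → ℝ) : u τ y = ∏ i, gaussianKernel (U i τ) (S i τ) (y i) := by
    rw [hu, prod_gaussianKernel, Fintype.card_fin]
  have hSpos i : 0 < S i t := funext (hS i) ▸ riccatiVariance_pos (hm i) (hs i) ht
  have hD i : m i * cosh (m i * t) + s i * sinh (m i * t) ≠ 0 :=
    (mul_cosh_add_mul_sinh_pos (hm i) (hs i).le (mul_nonneg (hm i).le ht)).ne'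
  have hSd i : HasDerivAt (S i) (m i ^ 2 - S i t ^ 2) t := by
    rw [funext (hS i)]
    exact hasDerivAt_riccatiVariance (hD i)
  have hUd i : HasDerivAt (U i) (-U i t * S i t) t := by
    rw [funext (hU i), funext (hS i)]
    exact hasDerivAt_riccatiMean (hD i)
  have hmean : ∫ y, u t y * a y = -(1 / 2) * ∑ i, (S i t + U i t ^ 2) := by
    simp_rw [hu_prod, ha, mul_left_comm _ (-(1 / 2 : ℝ))]
    rw [integral_const_mul, integral_prod_gaussianKernel_mul_sum_sq hSpos]
  have hlap i : deriv (deriv fun y ↦ u t (Function.update x i y)) (x i) =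
      (∏ j ∈ univ.erase i, gaussianKernel (U j t) (S j t) (x j)) *
        deriv (deriv (gaussianKernel (U i t) (S i t))) (x i) := by
    simp_rw [hu_prod, prod_apply_update, mul_comm (gaussianKernel _ _ _), deriv_const_mul_field']
  rw [hmean, ha]
  simp_rw [hlap, hu_prod]
  refine (hasDerivAt_prod_of_hasDerivAt_mul_add fun i ↦
    hasDerivAt_gaussianKernel_replicatorMutator (hUd i) (hSd i) (hSpos i) (x i)).congr_deriv ?_
  rw [sum_add_distrib, ← mul_sum, ← mul_sum]
  congr 1
  · ring
  · exact sum_congr rfl fun i _ ↦ by ring
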